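/- arXiv:2311.09584 — 5 statements merged into one kernel-verified Lean document; each statement's English description precedes it below -/
import Mathlib

section
/- For any finite undirected simple graph G, if G* is an orientation of G minimizing the maximum outdegree and G^κ is the degeneracy orientation of G (an acyclic orientation whose maximum outdegree equals the degeneracy κ(G)), then the maximum outdegree of G^κ is at most twice the maximum outdegree of G*: Δ⁺(G^κ) ≤ 2·Δ⁺(G*). -/
variable {V : Type*}

/-- `D` is an orientation of the simple graph `G`: each edge gets exactly one direction. -/
def IsOrientation (G : SimpleGraph V) (D : V → V → Prop) : Prop :=
  (∀ u v, G.Adj u v ↔ (D u v ∨ D v u)) ∧ ∀ u v, ¬ (D u v ∧ D v u)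

/-- A directed graph (relation) is acyclic: no directed cycle through any vertex. -/
def DirAcyclic (D : V → V → Prop) : Prop := ∀ v, ¬ Relation.TransGen D v v

/-- The maximum outdegree Δ⁺ of an oriented graph. -/
noncomputable def maxOutdeg [Fintype V] (D : V → V → Prop) : ℕ :=
  Finset.univ.sup fun v => ({w | D v w}).ncard

/-- The degeneracy of `G`: the maximum over all (induced) subgraphs of the minimum degree. -/
noncomputable def degeneracy [Fintype V] (G : SimpleGraph V) : ℕ :=
  sSup {k | ∃ s : Set V, s.Nonempty ∧ ∀ v ∈ s, k ≤ (s ∩ {w | G.Adj v w}).ncard}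

/-!
Every induced subgraph of `G` inherits an orientation from `D`, in which each vertex has
outdegree at most `Δ⁺(D)`. Since every edge is counted once as an out-edge and once as an
in-edge, the degrees in the subgraph sum to twice its outdegrees, so its average degree, and
hence its minimum degree, is at most `2·Δ⁺(D)`.
-/

open Finset

open scoped Classical in
theorem card_filter_le_maxOutdeg [Fintype V] (D : V → V → Prop) (t : Finset V) (v : V) :
    #{w ∈ t | D v w} ≤ maxOutdeg D := by
  calc #{w ∈ t | D v w} ≤ #{w | D v w} := card_le_card (monotone_filter_left _ (subset_univ t))
    _ = ({w | D v w} : Set V).ncard := by rw [← Set.ncard_coe_finset, coe_filter_univ]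
    _ ≤ maxOutdeg D := le_sup (f := fun v => ({w | D v w} : Set V).ncard) (mem_univ v)

namespace IsOrientation

open scoped Classical

variable {G : SimpleGraph V} {D : V → V → Prop}

theorem card_filter_adj_eq (hD : IsOrientation G D) (t : Finset V) (v : V) :
    #{w ∈ t | G.Adj v w} = #{w ∈ t | D v w} + #{w ∈ t | D w v} := by
  rw [← card_union_of_disjoint (disjoint_filter.mpr fun w _ hvw hwv => hD.2 v w ⟨hvw, hwv⟩),
    ← filter_or]
  simp only [hD.1 v]

theorem sum_card_filter_adj_eq (hD : IsOrientation G D) (t : Finset V) :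
    ∑ v ∈ t, #{w ∈ t | G.Adj v w} = 2 * ∑ v ∈ t, #{w ∈ t | D v w} := by
  have hin : ∑ v ∈ t, #{w ∈ t | D w v} = ∑ v ∈ t, #{w ∈ t | D v w} := by
    simp only [card_filter]
    exact sum_comm
  rw [sum_congr rfl fun v _ => hD.card_filter_adj_eq t v, sum_add_distrib, hin, two_mul]

theorem le_two_mul_maxOutdeg_of_le_card_filter_adj [Fintype V] (hD : IsOrientation G D)
    {t : Finset V} (ht : t.Nonempty) {k : ℕ} (hk : ∀ v ∈ t, k ≤ #{w ∈ t | G.Adj v w}) :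
    k ≤ 2 * maxOutdeg D := by
  refine le_of_mul_le_mul_right ?_ ht.card_pos
  calc k * #t = ∑ _v ∈ t, k := by rw [sum_const, smul_eq_mul, mul_comm]
    _ ≤ ∑ v ∈ t, #{w ∈ t | G.Adj v w} := sum_le_sum hk
    _ = 2 * ∑ v ∈ t, #{w ∈ t | D v w} := hD.sum_card_filter_adj_eq t
    _ ≤ 2 * ∑ _v ∈ t, maxOutdeg D := by
      gcongr with v
      exact card_filter_le_maxOutdeg D t v
    _ = 2 * maxOutdeg D * #t := by rw [sum_const, smul_eq_mul, mul_assoc, mul_comm #t]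

theorem degeneracy_le_two_mul_maxOutdeg [Fintype V] (hD : IsOrientation G D) :
    degeneracy G ≤ 2 * maxOutdeg D := by
  refine csSup_le' ?_
  rintro k ⟨s, hs, hk⟩
  refine hD.le_two_mul_maxOutdeg_of_le_card_filter_adj (t := s.toFinset)
    (Set.toFinset_nonempty.mpr hs) fun v hv => ?_
  convert hk v (Set.mem_toFinset.mp hv) using 1
  rw [← Set.ncard_coe_finset, coe_filter]
  simp_rw [Set.mem_toFinset]
  rfl

end IsOrientation

theorem stmt1_general [Fintype V] (G : SimpleGraph V) (Dstar Dk : V → V → Prop)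
    (hstar : IsOrientation G Dstar)
    (hkdeg : maxOutdeg Dk = degeneracy G) :
    maxOutdeg Dk ≤ 2 * maxOutdeg Dstar :=
  hkdeg ▸ hstar.degeneracy_le_two_mul_maxOutdeg

/-- if `Dstar` is an orientation of `G` minimizing the maximum outdegree and
`Dk` is the degeneracy orientation (an acyclic orientation whose maximum outdegree equals
the degeneracy of `G`), then `Δ⁺(Dk) ≤ 2·Δ⁺(Dstar)`. -/
theorem stmt1 [Fintype V] (G : SimpleGraph V) (Dstar Dk : V → V → Prop)
    (hstar : IsOrientation G Dstar)
    (hmin : ∀ D : V → V → Prop, IsOrientation G D → maxOutdeg Dstar ≤ maxOutdeg D)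
    (hk : IsOrientation G Dk) (hkacyc : DirAcyclic Dk)
    (hkdeg : maxOutdeg Dk = degeneracy G) :
    maxOutdeg Dk ≤ 2 * maxOutdeg Dstar :=
  stmt1_general G Dstar Dk hstar hkdeg
end

section
/- Let G be a finite simple graph and let k ≥ 3. Let G_t be the graph obtained from G by subdividing each edge exactly t times (replacing each edge by a path with t internal vertices), where k = 3(t+1). Then G contains a triangle if and only if G_t contains a cycle of length k. -/
/-!
The interior vertices of a subdivided edge have degree two, so a trail that enters a subdivided
edge cannot turn back and has to run along all `t + 1` of its edges. A cycle of `G_t` cannot stay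
inside the interior of one subdivided edge, which is a path, so it passes through a vertex of `G`;
starting there it splits into whole subdivided edges, and a cycle of length `3 (t + 1)` traverses
exactly three of them, which form a triangle of `G`. Conversely, the subdivided edges of a triangle
meet only at its corners, so together they form a cycle of length `3 (t + 1)`.
-/

variable {V : Type*} [LinearOrder V]

/-- The smaller endpoint of an (unordered) edge. -/
def sMin (e : Sym2 V) : V := Sym2.lift ⟨fun a b => min a b, fun a b => min_comm a b⟩ e

/-- The larger endpoint of an (unordered) edge. -/
def sMax (e : Sym2 V) : V := Sym2.lift ⟨fun a b => max a b, fun a b => max_comm a b⟩ e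

/-- The graph `G_t` obtained from `G` by subdividing each edge exactly `t` times:
each edge `e = (u,w)` (with `u = sMin e`, `w = sMax e`) is replaced by the path
`u, (e,0), (e,1), …, (e,t-1), w`.  (When `t = 0` the edge is kept as is.) -/
def Subdiv (G : SimpleGraph V) (t : ℕ) :
    SimpleGraph (V ⊕ (G.edgeSet × Fin t)) :=
  SimpleGraph.fromRel fun a b =>
    match a, b with
    | Sum.inl u, Sum.inl w => t = 0 ∧ G.Adj u w
    | Sum.inl u, Sum.inr (e, i) =>
        (i.val = 0 ∧ u = sMin (e : Sym2 V)) ∨ (i.val = t - 1 ∧ u = sMax (e : Sym2 V))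
    | Sum.inr (e, i), Sum.inr (e', j) => (e : Sym2 V) = (e' : Sym2 V) ∧ j.val = i.val + 1
    | _, _ => False

namespace SimpleGraph

variable {W : Type*} {H : SimpleGraph W}

lemma Walk.IsPath.start_notMem_support_tail {u v : W} {p : H.Walk u v} (hp : p.IsPath) :
    u ∉ p.support.tail := by
  have h := hp.support_nodup
  rw [← p.cons_tail_support, List.nodup_cons] at h
  exact h.1

def IsSuspendedChain (H : SimpleGraph W) (x : ℕ → W) (m : ℕ) : Prop :=
  ∀ j, 0 < j → j < m → ∀ y, H.Adj (x j) y → y = x (j - 1) ∨ y = x (j + 1)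

namespace IsSuspendedChain

variable {x : ℕ → W} {m : ℕ}

lemma reverse (h : H.IsSuspendedChain x m) : H.IsSuspendedChain (fun j => x (m - j)) m := by
  intro j hj hjm y hy
  rcases h (m - j) (by omega) (by omega) y hy with rfl | rfl
  · exact Or.inr (congrArg x (by omega))
  · exact Or.inl (congrArg x (by omega))

/-- A trail entering the chain at `x j` from `x (j - 1)` cannot turn back. -/
lemma exists_append_of_isTrail (h : H.IsSuspendedChain x m) {j : ℕ} (hj : 0 < j) (hjm : j ≤ m)
    {u b : W} (hu : x j = u) (hb : ∀ i, j ≤ i → i < m → x i ≠ b)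
    {p : H.Walk u b} (hp : p.IsTrail) (hprev : s(x (j - 1), u) ∉ p.edges) :
    ∃ (r : H.Walk u (x m)) (q : H.Walk (x m) b), p = r.append q ∧ r.length = m - j := by
  obtain ⟨n, hn⟩ : ∃ n, m - j = n := ⟨_, rfl⟩
  induction n generalizing j u with
  | zero =>
    obtain rfl : j = m := by omega
    subst hu
    exact ⟨Walk.nil, p, rfl, by simp⟩
  | succ n ih =>
    subst hu
    cases p with
    | nil => exact absurd rfl (hb j le_rfl (by omega))
    | cons hadj p =>
      rw [Walk.isTrail_cons] at hp
      rw [Walk.edges_cons, List.mem_cons, not_or] at hprev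
      rcases h j hj (by omega) _ hadj with rfl | rfl
      · exact absurd Sym2.eq_swap hprev.1
      · obtain ⟨r, q, rfl, hr⟩ := ih (j := j + 1) (by omega) (by omega) rfl
          (fun i hi => hb i (by omega)) hp.1 (by simpa using hp.2) (by omega)
        exact ⟨Walk.cons hadj r, q, rfl, by simp only [Walk.length_cons, hr]; omega⟩

lemma last_mem_support_of_isPath (h : H.IsSuspendedChain x m) (hinj : Set.InjOn x (Set.Iic m))
    {j : ℕ} (hj : 0 < j) (hjm : j < m) {u v : W} (hu : x j = u) (hv : x (j + 1) = v)
    {p : H.Walk v u} (hp : p.IsPath) (hprev : s(u, v) ∉ p.edges) : x m ∈ p.support := by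
  have hb : ∀ i, j + 1 ≤ i → i < m → x i ≠ u := fun i hi him hxi =>
    absurd (hinj (Set.mem_Iic.2 him.le) (Set.mem_Iic.2 hjm.le) (hxi.trans hu.symm)) (by omega)
  obtain ⟨r, q, rfl, -⟩ := h.exists_append_of_isTrail (by omega) hjm hv hb hp.isTrail
    (by simpa [hu] using hprev)
  exact (Walk.mem_support_append_iff r q).2 (Or.inl r.end_mem_support)

lemma mem_support_of_isCycle (h : H.IsSuspendedChain x m) (hinj : Set.InjOn x (Set.Iic m))
    {j : ℕ} (hj : 0 < j) (hjm : j < m) {u : W} (hu : x j = u) {c : H.Walk u u}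
    (hc : c.IsCycle) : x 0 ∈ c.support ∨ x m ∈ c.support := by
  cases c with
  | nil => exact absurd hc Walk.not_isCycle_nil
  | cons hadj p =>
    rw [Walk.cons_isCycle_iff] at hc
    subst hu
    rw [Walk.support_cons, List.mem_cons, List.mem_cons]
    rcases h j hj hjm _ hadj with rfl | rfl
    · have hinj' : Set.InjOn (fun i => x (m - i)) (Set.Iic m) := fun i hi i' hi' hii' => by
        have := hinj (Set.mem_Iic.2 (Nat.sub_le m i)) (Set.mem_Iic.2 (Nat.sub_le m i')) hii'
        simp only [Set.mem_Iic] at hi hi'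
        omega
      have := h.reverse.last_mem_support_of_isPath hinj' (j := m - j) (by omega)
        (by omega) (congrArg x (by omega)) (congrArg x (by omega)) hc.1 hc.2
      exact Or.inl (Or.inr (by simpa using this))
    · exact Or.inr (Or.inr (h.last_mem_support_of_isPath hinj hj hjm rfl rfl hc.1 hc.2))

end IsSuspendedChain

end SimpleGraph

open SimpleGraph

@[simp] lemma sMin_mk (a b : V) : sMin s(a, b) = min a b := rfl

@[simp] lemma sMax_mk (a b : V) : sMax s(a, b) = max a b := rfl

lemma mk_sMin_sMax (e : Sym2 V) : s(sMin e, sMax e) = e := by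
  induction e using Sym2.ind with
  | _ a b =>
    rcases le_total a b with h | h
    · simp [h]
    · simp [h, Sym2.eq_swap]

lemma sMin_mem (e : Sym2 V) : sMin e ∈ e := by
  simpa only [mk_sMin_sMax] using Sym2.mem_mk_left (sMin e) (sMax e)

lemma sMax_mem (e : Sym2 V) : sMax e ∈ e := by
  simpa only [mk_sMin_sMax] using Sym2.mem_mk_right (sMin e) (sMax e)

lemma adj_sMin_sMax {G : SimpleGraph V} (e : G.edgeSet) :
    G.Adj (sMin (e : Sym2 V)) (sMax (e : Sym2 V)) :=
  G.mem_edgeSet.1 (by rw [mk_sMin_sMax]; exact e.2)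

namespace Subdiv

section OnEdge

variable {U : Type*} {G : SimpleGraph U} {t : ℕ}

def IsOnEdge (e : Sym2 U) : U ⊕ (G.edgeSet × Fin t) → Prop
  | .inl v => v ∈ e
  | .inr (e', _) => (e' : Sym2 U) = e

lemma eq_inl_of_isOnEdge {a b c : U} (hab : G.Adj a b) (hbc : G.Adj b c) (hca : G.Adj c a)
    {x : U ⊕ (G.edgeSet × Fin t)} (h₁ : IsOnEdge s(a, b) x) (h₂ : IsOnEdge s(b, c) x) :
    x = .inl b := by
  rcases x with v | ⟨e, i⟩
  · simp only [IsOnEdge, Sym2.mem_iff] at h₁ h₂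
    rcases h₁ with rfl | rfl
    · rcases h₂ with rfl | rfl
      exacts [absurd rfl hab.ne, absurd rfl hca.ne']
    · rfl
  · simp only [IsOnEdge] at h₁ h₂
    rcases Sym2.eq_iff.1 (h₁.symm.trans h₂) with ⟨rfl, -⟩ | ⟨rfl, -⟩
    exacts [absurd rfl hab.ne, absurd rfl hca.ne']

end OnEdge

variable {G : SimpleGraph V} {t : ℕ}

lemma adj_inl_inl {u w : V} :
    (Subdiv G t).Adj (.inl u) (.inl w) ↔ t = 0 ∧ G.Adj u w := by
  rw [Subdiv, fromRel_adj]
  constructor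
  · rintro ⟨-, h | ⟨h0, h⟩⟩
    exacts [h, ⟨h0, h.symm⟩]
  · rintro h
    exact ⟨by simpa using h.2.ne, Or.inl h⟩

lemma adj_inl_inr {u : V} {e : G.edgeSet} {i : Fin t} :
    (Subdiv G t).Adj (.inl u) (.inr (e, i)) ↔
      (i.val = 0 ∧ u = sMin (e : Sym2 V)) ∨ (i.val = t - 1 ∧ u = sMax (e : Sym2 V)) := by
  simp [Subdiv]

lemma adj_inr_inr {e e' : G.edgeSet} {i j : Fin t} :
    (Subdiv G t).Adj (.inr (e, i)) (.inr (e', j)) ↔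
      e = e' ∧ (j.val = i.val + 1 ∨ i.val = j.val + 1) := by
  rw [Subdiv, fromRel_adj]
  constructor
  · rintro ⟨-, ⟨he, hij⟩ | ⟨he, hij⟩⟩
    exacts [⟨Subtype.ext he, Or.inl hij⟩, ⟨Subtype.ext he.symm, Or.inr hij⟩]
  · rintro ⟨rfl, hij⟩
    refine ⟨fun h => ?_, by simpa using hij⟩
    obtain rfl := (Prod.mk.inj (Sum.inr.inj h)).2
    omega

variable (t) in
def edgeVertex (e : G.edgeSet) (j : ℕ) : V ⊕ (G.edgeSet × Fin t) :=
  if h0 : j = 0 then .inl (sMin (e : Sym2 V))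
  else if h : j ≤ t then .inr (e, ⟨j - 1, by omega⟩) else .inl (sMax (e : Sym2 V))

@[simp] lemma edgeVertex_zero (e : G.edgeSet) : edgeVertex t e 0 = .inl (sMin (e : Sym2 V)) := by
  simp [edgeVertex]

@[simp] lemma edgeVertex_add_one_self (e : G.edgeSet) :
    edgeVertex t e (t + 1) = .inl (sMax (e : Sym2 V)) := by
  simp [edgeVertex]

lemma edgeVertex_val_add_one (e : G.edgeSet) (i : Fin t) :
    edgeVertex t e (i + 1) = .inr (e, i) := by
  simp [edgeVertex, Nat.succ_le_of_lt i.isLt]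

lemma edgeVertex_ne_inl (e : G.edgeSet) {j : ℕ} (hj : 0 < j) (hjt : j ≤ t) (v : V) :
    edgeVertex t e j ≠ .inl v := by
  simp [edgeVertex, hj.ne', hjt]

lemma adj_edgeVertex_add_one (e : G.edgeSet) {j : ℕ} (hj : j ≤ t) :
    (Subdiv G t).Adj (edgeVertex t e j) (edgeVertex t e (j + 1)) := by
  have hne := (adj_sMin_sMax e).ne
  unfold edgeVertex
  split_ifs <;> simp_all [adj_inl_inl, adj_inl_inr, adj_inr_inr, adj_comm]
  exacts [(adj_sMin_sMax e).symm, by omega, Or.inr (by omega)]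

lemma isSuspendedChain_edgeVertex (e : G.edgeSet) :
    (Subdiv G t).IsSuspendedChain (edgeVertex t e) (t + 1) := by
  intro j hj hjt y hy
  obtain ⟨i, rfl⟩ : ∃ i : Fin t, j = i + 1 := ⟨⟨j - 1, by omega⟩, (Nat.sub_add_cancel hj).symm⟩
  rw [edgeVertex_val_add_one] at hy
  rcases y with v | ⟨e', i'⟩
  · rcases adj_inl_inr.1 hy.symm with ⟨hi, rfl⟩ | ⟨hi, rfl⟩
    · exact Or.inl (by simp [hi])
    · exact Or.inr (by rw [show (i : ℕ) + 1 + 1 = t + 1 by omega, edgeVertex_add_one_self])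
  · obtain ⟨rfl, h | h⟩ := adj_inr_inr.1 hy
    · exact Or.inr (by rw [← edgeVertex_val_add_one, h])
    · exact Or.inl (by rw [← edgeVertex_val_add_one]; congr 1; omega)

lemma injOn_edgeVertex (e : G.edgeSet) : Set.InjOn (edgeVertex t e) (Set.Iic (t + 1)) := by
  have hne := (adj_sMin_sMax e).ne
  intro i hi i' hi' h
  simp only [Set.mem_Iic] at hi hi'
  unfold edgeVertex at h
  split_ifs at h <;> simp_all [Fin.ext_iff] <;> omega

lemma isOnEdge_edgeVertex (e : G.edgeSet) (j : ℕ) :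
    IsOnEdge (e : Sym2 V) (edgeVertex t e j) := by
  unfold edgeVertex
  split_ifs
  exacts [sMin_mem _, rfl, sMax_mem _]

lemma exists_isPath_sMin_sMax (e : G.edgeSet) :
    ∃ p : (Subdiv G t).Walk (.inl (sMin (e : Sym2 V))) (.inl (sMax (e : Sym2 V))),
      p.IsPath ∧ p.length = t + 1 ∧ ∀ x ∈ p.support, IsOnEdge (e : Sym2 V) x := by
  have hchain : ((List.range (t + 2)).map (edgeVertex t e)).IsChain (Subdiv G t).Adj := by
    rw [List.isChain_map, List.isChain_range_succ]
    exact fun j hj => adj_edgeVertex_add_one e (by omega)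
  have hne : (List.range (t + 2)).map (edgeVertex t e) ≠ [] := by simp
  have hIic {j : ℕ} (hj : j ∈ List.range (t + 2)) : j ∈ Set.Iic (t + 1) :=
    Set.mem_Iic.2 (Nat.lt_succ_iff.1 (List.mem_range.1 hj))
  refine ⟨(Walk.ofSupport _ hne hchain).copy (by simp) (by simp [List.getLast_map]), ?_, ?_, ?_⟩
  · rw [Walk.isPath_copy, Walk.isPath_def, Walk.support_ofSupport]
    exact List.nodup_range.map_on fun i hi i' hi' h => injOn_edgeVertex e (hIic hi) (hIic hi') h
  · simp
  · rw [Walk.support_copy, Walk.support_ofSupport]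
    intro x hx
    obtain ⟨j, -, rfl⟩ := List.mem_map.1 hx
    exact isOnEdge_edgeVertex e j

lemma exists_isPath_of_adj {a b : V} (h : G.Adj a b) :
    ∃ p : (Subdiv G t).Walk (.inl a) (.inl b),
      p.IsPath ∧ p.length = t + 1 ∧ ∀ x ∈ p.support, IsOnEdge s(a, b) x := by
  obtain ⟨p, hp, hl, hon⟩ := exists_isPath_sMin_sMax (t := t) ⟨s(a, b), h⟩
  rcases h.ne.lt_or_gt with hab | hab
  · refine ⟨p.copy (by simp [hab.le]) (by simp [hab.le]), by rwa [Walk.isPath_copy],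
      by rwa [Walk.length_copy], fun x hx => hon x (by rwa [Walk.support_copy] at hx)⟩
  · refine ⟨p.reverse.copy (by simp [hab.le]) (by simp [hab.le]),
      by rwa [Walk.isPath_copy, Walk.isPath_reverse_iff],
      by rwa [Walk.length_copy, Walk.length_reverse],
      fun x hx => hon x (by rwa [Walk.support_copy, Walk.support_reverse, List.mem_reverse] at hx)⟩

lemma exists_isCycle_of_triangle {a b c : V} (hab : G.Adj a b) (hbc : G.Adj b c)
    (hca : G.Adj c a) :
    ∃ (x : V ⊕ (G.edgeSet × Fin t)) (w : (Subdiv G t).Walk x x),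
      w.IsCycle ∧ w.length = 3 * (t + 1) := by
  obtain ⟨p₁, hp₁, hl₁, hs₁⟩ := exists_isPath_of_adj (t := t) hab
  obtain ⟨p₂, hp₂, hl₂, hs₂⟩ := exists_isPath_of_adj (t := t) hbc
  obtain ⟨p₃, hp₃, hl₃, hs₃⟩ := exists_isPath_of_adj (t := t) hca
  have hp₂₃ : (p₂.append p₃).IsPath := by
    rw [Walk.isPath_def, Walk.support_append, List.nodup_append]
    refine ⟨hp₂.support_nodup, hp₃.support_nodup.tail, fun x hx y hy hxy => ?_⟩
    subst hxy
    have := eq_inl_of_isOnEdge hbc hca hab (hs₂ x hx) (hs₃ x (List.mem_of_mem_tail hy))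
    exact hp₃.start_notMem_support_tail (this ▸ hy)
  refine ⟨_, p₁.append (p₂.append p₃), hp₁.isCycle_append hp₂₃ ?_ (by simp only [Walk.length_append]; omega),
    by simp only [Walk.length_append]; omega⟩
  rw [Walk.tail_support_append]
  intro x hx₁ hx
  rcases List.mem_append.1 hx with hx₂ | hx₃
  · have := eq_inl_of_isOnEdge hab hbc hca (hs₁ x (List.mem_of_mem_tail hx₁))
      (hs₂ x (List.mem_of_mem_tail hx₂))
    exact hp₂.start_notMem_support_tail (this ▸ hx₂)
  · have := eq_inl_of_isOnEdge hca hab hbc (hs₃ x (List.mem_of_mem_tail hx₃))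
      (hs₁ x (List.mem_of_mem_tail hx₁))
    exact hp₁.start_notMem_support_tail (this ▸ hx₁)

lemma exists_inl_mem_support_of_isCycle {x : V ⊕ (G.edgeSet × Fin t)}
    {c : (Subdiv G t).Walk x x} (hc : c.IsCycle) : ∃ u : V, .inl u ∈ c.support := by
  rcases x with u | ⟨e, i⟩
  · exact ⟨u, c.start_mem_support⟩
  · rcases (isSuspendedChain_edgeVertex e).mem_support_of_isCycle (injOn_edgeVertex e)
      (j := i + 1) (by omega) (by omega) (edgeVertex_val_add_one e i) hc with h | h
    · exact ⟨_, by simpa using h⟩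
    · exact ⟨_, by simpa using h⟩

lemma exists_adj_of_isTrail {a b : V} {p : (Subdiv G t).Walk (.inl a) (.inl b)} (hp : p.IsTrail)
    (hl : 0 < p.length) :
    ∃ (c : V) (q : (Subdiv G t).Walk (.inl c) (.inl b)),
      G.Adj a c ∧ q.IsTrail ∧ p.length = t + 1 + q.length := by
  cases p with
  | nil => simp at hl
  | @cons _ y _ hadj p =>
    rw [Walk.isTrail_cons] at hp
    rcases y with c | ⟨e, i⟩
    · obtain ⟨rfl, hac⟩ := adj_inl_inl.1 hadj
      exact ⟨c, p, hac, hp.1, by simp [add_comm]⟩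
    rcases adj_inl_inr.1 hadj with ⟨hi, rfl⟩ | ⟨hi, rfl⟩
    · obtain ⟨r, q, rfl, hr⟩ := (isSuspendedChain_edgeVertex e).exists_append_of_isTrail
        Nat.one_pos (by omega) (by simpa [hi] using edgeVertex_val_add_one e i)
        (fun j hj hjt => edgeVertex_ne_inl e hj (by omega) b) hp.1 (by simpa using hp.2)
      refine ⟨_, q.copy (edgeVertex_add_one_self e) rfl, adj_sMin_sMax e, ?_, ?_⟩
      · rw [Walk.isTrail_copy]; exact hp.1.of_append_right
      · simp only [Walk.length_cons, Walk.length_append, hr, Walk.length_copy]; omega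
    · obtain ⟨r, q, rfl, hr⟩ := (isSuspendedChain_edgeVertex e).reverse.exists_append_of_isTrail
        Nat.one_pos (by omega) (by
          show edgeVertex t e (t + 1 - 1) = _
          rw [show t + 1 - 1 = i + 1 by omega, edgeVertex_val_add_one])
        (fun j hj hjt => edgeVertex_ne_inl e (by omega) (by omega) b) hp.1 (by simpa using hp.2)
      refine ⟨_, q.copy (by simp) rfl, (adj_sMin_sMax e).symm, ?_, ?_⟩
      · rw [Walk.isTrail_copy]; exact hp.1.of_append_right
      · simp only [Walk.length_cons, Walk.length_append, hr, Walk.length_copy]; omega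

lemma exists_triangle_of_isCycle {x : V ⊕ (G.edgeSet × Fin t)} {w : (Subdiv G t).Walk x x}
    (hc : w.IsCycle) (hl : w.length = 3 * (t + 1)) :
    ∃ a b c : V, G.Adj a b ∧ G.Adj b c ∧ G.Adj c a := by
  obtain ⟨u, hu⟩ := exists_inl_mem_support_of_isCycle hc
  have hl' : (w.rotate _ hu).length = 3 * (t + 1) := by rw [Walk.length_rotate, hl]
  obtain ⟨c₁, q₁, h₁, hq₁, hl₁⟩ := exists_adj_of_isTrail (hc.rotate hu).isTrail (by omega)
  obtain ⟨c₂, q₂, h₂, hq₂, hl₂⟩ := exists_adj_of_isTrail hq₁ (by omega)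
  obtain ⟨c₃, q₃, h₃, -, hl₃⟩ := exists_adj_of_isTrail hq₂ (by omega)
  obtain rfl : c₃ = u := Sum.inl.inj (Walk.eq_of_length_eq_zero (by omega : q₃.length = 0))
  exact ⟨c₃, c₁, c₂, h₁, h₂, h₃⟩

end Subdiv

theorem stmt3_general (G : SimpleGraph V) (k t : ℕ) (hkt : k = 3 * (t + 1)) :
    (∃ a b c : V, G.Adj a b ∧ G.Adj b c ∧ G.Adj c a) ↔
    (∃ (x : V ⊕ (G.edgeSet × Fin t)) (w : (Subdiv G t).Walk x x),
      w.IsCycle ∧ w.length = k) := by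
  subst hkt
  constructor
  · rintro ⟨a, b, c, hab, hbc, hca⟩
    exact Subdiv.exists_isCycle_of_triangle hab hbc hca
  · rintro ⟨x, w, hc, hl⟩
    exact Subdiv.exists_triangle_of_isCycle hc hl

/-- for `k = 3(t+1) ≥ 3`, `G` contains a triangle iff the `t`-fold
subdivision `G_t` contains a cycle of length `k`. -/
theorem stmt3 (G : SimpleGraph V) (k t : ℕ) (hk : 3 ≤ k) (hkt : k = 3 * (t + 1)) :
    (∃ a b c : V, G.Adj a b ∧ G.Adj b c ∧ G.Adj c a) ↔
    (∃ (x : V ⊕ (G.edgeSet × Fin t)) (w : (Subdiv G t).Walk x x),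
      w.IsCycle ∧ w.length = k) :=
  stmt3_general G k t hkt
end

section
/- Let H⃗ be a directed graph with hubset S, let S_p ⊊ S, and let T be a partial hub-tree decomposition of S_p of width one. Let s ∈ S \ S_p and suppose d ∈ S_p is an S_p-cover of s, i.e., for every s₂ ∈ S_p, Reach(s) ∩ Reach(s₂) ⊆ Reach(d). Then attaching s as a leaf to the node containing d yields a partial hub-tree decomposition of S_p ∪ {s} of width one. -/
variable {V : Type*}

/-- The set of vertices reachable from `v` by a directed path. -/
def Reach (D : V → V → Prop) (v : V) : Set V := {w | Relation.ReflTransGen D v w}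

/-- `S` is a hubset of the directed graph `D`. -/
def IsHubset (D : V → V → Prop) (S : Set V) : Prop :=
  (∀ s ∈ S, ∀ s' ∈ S, s ≠ s' → ¬ Relation.TransGen D s s') ∧
  (∀ v, v ∉ S → ∃ s ∈ S, v ∈ Reach D s)

/-- A width-one partial hub-tree decomposition of the set `Sp` of hub vertices:
a tree on `Sp` (all bags are singletons, identified with their vertex) such that
whenever `b` lies on the (unique) path between `b₁` and `b₂`,
`Reach(b₁) ∩ Reach(b₂) ⊆ Reach(b)`. -/
def IsWidthOneDecomp (D : V → V → Prop) (Sp : Set V) (T : SimpleGraph Sp) : Prop :=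
  T.IsTree ∧
  ∀ (b b₁ b₂ : Sp) (p : T.Walk b₁ b₂), p.IsPath → b ∈ p.support →
    Reach D (b₁ : V) ∩ Reach D (b₂ : V) ⊆ Reach D (b : V)

/-!
Attaching a leaf `s` at `d` keeps a tree a tree: `s` has a single neighbour, so it lies on no
cycle and can only be an endpoint of a path. A path avoiding `s` is the image of a path of the
old tree, where the running-intersection property holds already. A path starting at `s` passes
through `d` next, and the cover hypothesis `Reach s ∩ Reach y ⊆ Reach d` reduces it to the
path from `d` to `y` in the old tree.
-/

namespace SimpleGraph

variable {α β γ : Type*} {G : SimpleGraph α} {H : SimpleGraph β}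

def HasRunningIntersection (G : SimpleGraph α) (r : α → Set γ) : Prop :=
  ∀ (b b₁ b₂ : α) (p : G.Walk b₁ b₂), p.IsPath → b ∈ p.support → r b₁ ∩ r b₂ ⊆ r b

namespace Walk

theorem exists_map_eq_of_support_subset_range (f : G ↪g H) {x y : β} (p : H.Walk x y)
    (hp : ∀ w ∈ p.support, w ∈ Set.range f) {a b : α} (ha : f a = x) (hb : f b = y) :
    ∃ q : G.Walk a b, (q.map f.toHom).copy ha hb = p := by
  induction p generalizing a with
  | nil =>
    obtain rfl := f.injective (ha.trans hb.symm)
    subst ha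
    exact ⟨nil, rfl⟩
  | cons h p ih =>
    obtain ⟨c, rfl⟩ := hp _ (List.mem_cons_of_mem _ p.start_mem_support)
    obtain ⟨q, rfl⟩ := ih (fun w hw => hp w (List.mem_cons_of_mem _ hw)) rfl hb
    subst ha hb
    exact ⟨cons (f.map_adj_iff.mp h) q, rfl⟩

theorem IsPath.eq_or_eq_of_mem_support {v x y : β} (hv : (H.neighborSet v).Subsingleton)
    {p : H.Walk x y} (hp : p.IsPath) (hmem : v ∈ p.support) : v = x ∨ v = y := by
  induction p with
  | nil => exact .inl (by simpa using hmem)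
  | @cons x z y h p ih =>
    rw [cons_isPath_iff] at hp
    rcases List.mem_cons.mp hmem with rfl | hmem
    · exact .inl rfl
    rcases ih hp.1 hmem with rfl | rfl
    · cases p with
      | nil => exact .inr rfl
      | cons h' p =>
        have hx := hv h.symm h'
        exact (hp.2 (by simp [hx])).elim
    · exact .inr rfl

theorem IsCycle.notMem_support {v x : β} (hv : (H.neighborSet v).Subsingleton)
    {c : H.Walk x x} (hc : c.IsCycle) : v ∉ c.support := by
  classical
  intro hmem
  have hc' := hc.rotate hmem
  exact hc'.snd_ne_penultimate (hv (adj_snd hc'.not_nil) (adj_penultimate hc'.not_nil).symm)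

end Walk

section Pendant

variable (f : G ↪g H) {v : β} {u : α}

theorem HasRunningIntersection.inter_subset_of_support_subset_range {r : β → Set γ}
    (hG : G.HasRunningIntersection (r ∘ f)) {x y z : β} {p : H.Walk x y} (hp : p.IsPath)
    (hsupp : ∀ w ∈ p.support, w ∈ Set.range f) (hz : z ∈ p.support) : r x ∩ r y ⊆ r z := by
  obtain ⟨a, rfl⟩ := hsupp x p.start_mem_support
  obtain ⟨b, rfl⟩ := hsupp y p.end_mem_support
  obtain ⟨q, rfl⟩ := p.exists_map_eq_of_support_subset_range f hsupp rfl rfl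
  rw [Walk.copy_rfl_rfl, Walk.support_map, List.mem_map] at hz
  obtain ⟨c, hc, rfl⟩ := hz
  exact hG c a b q ((Walk.isPath_map_iff_of_injective f.injective).mp hp) hc

theorem HasRunningIntersection.of_embedding_of_pendant (hrange : ∀ w, w ≠ v → w ∈ Set.range f)
    (hv : ∀ w, H.Adj v w → w = f u) {r : β → Set γ} (hG : G.HasRunningIntersection (r ∘ f))
    (hcover : ∀ a, r v ∩ r (f a) ⊆ r (f u)) : H.HasRunningIntersection r := by
  have hv' : (H.neighborSet v).Subsingleton := fun w hw w' hw' =>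
    (hv w hw).trans (hv w' hw').symm
  have hsupp {x y : β} (p : H.Walk x y) (hvp : v ∉ p.support) :
      ∀ w ∈ p.support, w ∈ Set.range f :=
    fun w hw => hrange w (by rintro rfl; exact hvp hw)
  have hleaf {y z : β} (p : H.Walk v y) (hp : p.IsPath) (hz : z ∈ p.support) (hzv : z ≠ v) :
      r v ∩ r y ⊆ r z := by
    cases p with
    | nil => exact absurd (by simpa using hz) hzv
    | cons h p =>
      obtain rfl := hv _ h
      rw [Walk.cons_isPath_iff] at hp
      have hzp : z ∈ p.support := (List.mem_cons.mp hz).resolve_left hzv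
      have hsep := hG.inter_subset_of_support_subset_range f hp.1 (hsupp p hp.2) hzp
      obtain ⟨a, rfl⟩ := hsupp p hp.2 y p.end_mem_support
      exact fun t ht => hsep ⟨hcover a ht, ht.2⟩
  intro z x y p hp hz
  by_cases hzx : z = x
  · exact hzx ▸ Set.inter_subset_left
  by_cases hzy : z = y
  · exact hzy ▸ Set.inter_subset_right
  by_cases hvp : v ∈ p.support
  · rcases hp.eq_or_eq_of_mem_support hv' hvp with rfl | rfl
    · exact hleaf p hp hz hzx
    · rw [Set.inter_comm]
      exact hleaf p.reverse hp.reverse (by simpa using hz) hzy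
  · exact hG.inter_subset_of_support_subset_range f hp (hsupp p hvp) hz

theorem IsTree.of_embedding_of_pendant (hrange : ∀ w, w ≠ v → w ∈ Set.range f) (hG : G.IsTree)
    (hv : ∀ w, H.Adj v w ↔ w = f u) : H.IsTree := by
  have hreach : ∀ w, H.Reachable w (f u) := by
    intro w
    by_cases hw : w = v
    · exact hw ▸ ((hv _).mpr rfl).reachable
    · obtain ⟨a, rfl⟩ := hrange w hw
      exact (hG.connected a u).map f.toHom
  have hv' : (H.neighborSet v).Subsingleton := fun w hw w' hw' =>
    ((hv w).mp hw).trans ((hv w').mp hw').symm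
  refine ⟨(connected_iff _).mpr ⟨fun w w' => (hreach w).trans (hreach w').symm, ⟨v⟩⟩,
    fun x c hc => ?_⟩
  have hvc := hc.notMem_support hv'
  have hsupp : ∀ w ∈ c.support, w ∈ Set.range f := fun w hw =>
    hrange w (by rintro rfl; exact hvc hw)
  obtain ⟨a, rfl⟩ := hsupp x c.start_mem_support
  obtain ⟨q, rfl⟩ := c.exists_map_eq_of_support_subset_range f hsupp rfl rfl
  exact hG.isAcyclic q ((Walk.isCycle_map_iff_of_injective f.injective).mp hc)

end Pendant

end SimpleGraph

section AttachLeaf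

open SimpleGraph

variable {Sp : Set V}

lemma isWidthOneDecomp_iff {D : V → V → Prop} {T : SimpleGraph Sp} :
    IsWidthOneDecomp D Sp T ↔ T.IsTree ∧ T.HasRunningIntersection fun b => Reach D b :=
  Iff.rfl

def attachLeaf (T : SimpleGraph Sp) (s : V) (d : Sp) : SimpleGraph ↥(Sp ∪ {s}) :=
  SimpleGraph.fromRel fun a b : ↥(Sp ∪ {s}) =>
    (∃ (ha : (a : V) ∈ Sp) (hb : (b : V) ∈ Sp), T.Adj ⟨a, ha⟩ ⟨b, hb⟩) ∨
    ((a : V) = s ∧ (b : V) = (d : V))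

def attachLeafEmbedding (T : SimpleGraph Sp) {s : V} (hs : s ∉ Sp) (d : Sp) :
    T ↪g attachLeaf T s d where
  toFun a := ⟨a, .inl a.2⟩
  inj' _ _ h := Subtype.ext (Subtype.mk.inj h)
  map_rel_iff' {a b} := by
    simp only [attachLeaf, fromRel_adj]
    constructor
    · rintro ⟨-, (⟨_, _, h⟩ | ⟨h, -⟩) | (⟨_, _, h⟩ | ⟨h, -⟩)⟩
      exacts [h, absurd (h ▸ a.2) hs, h.symm, absurd (h ▸ b.2) hs]
    · exact fun h =>
        ⟨fun e => h.ne (Subtype.ext (Subtype.mk.inj e)), .inl (.inl ⟨a.2, b.2, h⟩)⟩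

lemma attachLeaf_adj_leaf_iff {T : SimpleGraph Sp} {s : V} (hs : s ∉ Sp) {d : Sp}
    (w : ↥(Sp ∪ {s})) :
    (attachLeaf T s d).Adj ⟨s, .inr rfl⟩ w ↔ w = attachLeafEmbedding T hs d d := by
  simp only [attachLeaf, fromRel_adj]
  constructor
  · rintro ⟨hne, (⟨h, -⟩ | ⟨-, h⟩) | (⟨-, h, -⟩ | ⟨h, -⟩)⟩
    exacts [absurd h hs, Subtype.ext h, absurd h hs, absurd (Subtype.ext h.symm) hne]
  · rintro rfl
    exact ⟨fun e => hs (Subtype.mk.inj e ▸ d.2), .inl (.inr ⟨trivial, rfl⟩)⟩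

lemma mem_range_attachLeafEmbedding {T : SimpleGraph Sp} {s : V} (hs : s ∉ Sp) {d : Sp}
    (w : ↥(Sp ∪ {s})) (hw : w ≠ ⟨s, .inr rfl⟩) : w ∈ Set.range (attachLeafEmbedding T hs d) := by
  obtain ⟨w, hwSp | rfl⟩ := w
  · exact ⟨⟨w, hwSp⟩, rfl⟩
  · exact absurd rfl hw

end AttachLeaf

theorem stmt12_general (D : V → V → Prop) (S Sp : Set V)
    (T : SimpleGraph Sp) (hT : IsWidthOneDecomp D Sp T)
    (s : V) (hs : s ∈ S \ Sp) (d : Sp)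
    (hcover : ∀ s₂ ∈ Sp, Reach D s ∩ Reach D s₂ ⊆ Reach D (d : V)) :
    IsWidthOneDecomp D (Sp ∪ {s})
      (SimpleGraph.fromRel fun a b : ↥(Sp ∪ {s}) =>
        (∃ (ha : (a : V) ∈ Sp) (hb : (b : V) ∈ Sp), T.Adj ⟨a, ha⟩ ⟨b, hb⟩) ∨
        ((a : V) = s ∧ (b : V) = (d : V))) := by
  change IsWidthOneDecomp D (Sp ∪ {s}) (attachLeaf T s d)
  obtain ⟨hTree, hT⟩ := isWidthOneDecomp_iff.mp hT
  have hrange := mem_range_attachLeafEmbedding (T := T) hs.2 (d := d)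
  have hleaf := attachLeaf_adj_leaf_iff (T := T) hs.2 (d := d)
  exact isWidthOneDecomp_iff.mpr
    ⟨hTree.of_embedding_of_pendant _ hrange hleaf,
      hT.of_embedding_of_pendant (r := fun b => Reach D b) _ hrange (fun w => (hleaf w).mp)
        fun a => hcover a a.2⟩

/-- attaching `s ∈ S \ Sp` as a leaf to a node `d` of a width-one partial
hub-tree decomposition of `Sp ⊊ S`, where `d` is an `Sp`-cover of `s`, yields a width-one
partial hub-tree decomposition of `Sp ∪ {s}`. -/
theorem stmt12 (D : V → V → Prop) (S Sp : Set V) (hS : IsHubset D S) (hsub : Sp ⊂ S)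
    (T : SimpleGraph Sp) (hT : IsWidthOneDecomp D Sp T)
    (s : V) (hs : s ∈ S \ Sp) (d : Sp)
    (hcover : ∀ s₂ ∈ Sp, Reach D s ∩ Reach D s₂ ⊆ Reach D (d : V)) :
    IsWidthOneDecomp D (Sp ∪ {s})
      (SimpleGraph.fromRel fun a b : ↥(Sp ∪ {s}) =>
        (∃ (ha : (a : V) ∈ Sp) (hb : (b : V) ∈ Sp), T.Adj ⟨a, ha⟩ ⟨b, hb⟩) ∨
        ((a : V) = s ∧ (b : V) = (d : V))) :=
  stmt12_general D S Sp T hT s hs d hcover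
end

section
/- Let H⃗ be a directed weighted graph with hubset S and unique reachability graph UR on vertex set S' ⊆ S. Suppose s₁,...,s_l ∈ S form a cycle in UR (l ≥ 3). For each i, the set C(s_i, s_{i+1}) of vertices reachable from both s_i and s_{i+1} but from no other s_j is nonempty, and for i ≠ j there is no edge of the underlying undirected graph connecting a vertex of C(s_i, s_{i+1}) to a vertex of C(s_j, s_{j+1}). -/
variable {V : Type*}

/-- The set of vertices reachable from some vertex of `A`. -/
def ReachS (D : V → V → Prop) (A : Set V) : Set V := ⋃ s ∈ A, Reach D s

/-- The edge relation of the unique reachability graph `UR_{S'}`. -/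
def URAdj (D : V → V → Prop) (S' : Set V) (s₁ s₂ : V) : Prop :=
  s₁ ≠ s₂ ∧ ((Reach D s₁ ∩ Reach D s₂) \ ReachS D (S' \ {s₁, s₂})).Nonempty

/-- The region `C(s₁,s₂)`: vertices reachable from both `s₁` and `s₂` but from no other
element of `S'`. -/
def CReg (D : V → V → Prop) (S' : Set V) (s₁ s₂ : V) : Set V :=
  (Reach D s₁ ∩ Reach D s₂) \ ReachS D (S' \ {s₁, s₂})

/-!
A directed edge `x → y` with `x ∈ C(a,b)` makes `y` reachable from both `a` and `b`; if also
`y ∈ C(c,d)`, then `{a,b} ⊆ {c,d}`. For consecutive pairs of an injective cycle of length at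
least three this forces the two pairs to be the same edge of the cycle.
-/

section UniqueReachability

variable {D : V → V → Prop} {S' : Set V} {a b c d x y : V}

lemma mem_reach_of_adj (hx : x ∈ Reach D a) (hxy : D x y) : y ∈ Reach D a :=
  Relation.ReflTransGen.tail hx hxy

lemma CReg_comm : CReg D S' a b = CReg D S' b a := by
  unfold CReg
  rw [Set.inter_comm, Set.pair_comm]

lemma mem_pair_of_adj_of_mem_CReg (ha : a ∈ S') (hx : x ∈ CReg D S' a b)
    (hy : y ∈ CReg D S' c d) (hxy : D x y) : a ∈ ({c, d} : Set V) := by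
  by_contra h
  exact hy.2 (Set.mem_biUnion ⟨ha, h⟩ (mem_reach_of_adj hx.1.1 hxy))

lemma pair_subset_of_adj_of_mem_CReg (ha : a ∈ S') (hb : b ∈ S') (hx : x ∈ CReg D S' a b)
    (hy : y ∈ CReg D S' c d) (hxy : D x y) : ({a, b} : Set V) ⊆ {c, d} :=
  Set.pair_subset (mem_pair_of_adj_of_mem_CReg ha hx hy hxy)
    (mem_pair_of_adj_of_mem_CReg hb (CReg_comm ▸ hx) hy hxy)

end UniqueReachability

lemma ZMod.two_ne_zero_of_three_le {l : ℕ} (hl : 3 ≤ l) : (2 : ZMod l) ≠ 0 := by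
  intro h
  have hdvd : l ∣ 2 := (ZMod.natCast_eq_zero_iff 2 l).mp (by exact_mod_cast h)
  have := Nat.le_of_dvd two_pos hdvd
  omega

lemma eq_of_pair_add_one_subset {l : ℕ} (hl : 3 ≤ l) {f : ZMod l → V}
    (hf : Function.Injective f) {i j : ZMod l}
    (h : ({f i, f (i + 1)} : Set V) ⊆ {f j, f (j + 1)}) : i = j := by
  obtain ⟨hi, hi'⟩ := Set.pair_subset_iff.mp h
  rcases hi with hi | hi
  · exact hf hi
  rcases hi' with hi' | hi'
  · have hij : i = j + 1 := hf hi
    have hji : i + 1 = j := hf hi'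
    exact absurd (by linear_combination hji - hij) (ZMod.two_ne_zero_of_three_le hl)
  · exact add_right_cancel (hf hi')

theorem stmt13_general (D : V → V → Prop)
    (S' : Set V)
    (l : ℕ) (hl : 3 ≤ l) (f : ZMod l → V)
    (hinj : Function.Injective f) (hmem : ∀ i, f i ∈ S')
    (hcyc : ∀ i, URAdj D S' (f i) (f (i + 1))) :
    (∀ i, (CReg D S' (f i) (f (i + 1))).Nonempty) ∧
    (∀ i j, i ≠ j →
      ∀ x ∈ CReg D S' (f i) (f (i + 1)), ∀ y ∈ CReg D S' (f j) (f (j + 1)),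
        ¬ (D x y ∨ D y x)) := by
  have eq_of_adj : ∀ i j, ∀ x ∈ CReg D S' (f i) (f (i + 1)),
      ∀ y ∈ CReg D S' (f j) (f (j + 1)), D x y → i = j :=
    fun i j _ hx _ hy hxy => eq_of_pair_add_one_subset hl hinj
      (pair_subset_of_adj_of_mem_CReg (hmem i) (hmem (i + 1)) hx hy hxy)
  refine ⟨fun i => (hcyc i).2, ?_⟩
  rintro i j hij x hx y hy (hxy | hyx)
  · exact hij (eq_of_adj i j x hx y hy hxy)
  · exact hij (eq_of_adj j i y hy x hx hyx).symm

/-- if `s₁,…,s_l` (`l ≥ 3`) form a cycle in the unique reachability graph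
`UR_{S'}` of a directed weighted graph with hubset `S ⊇ S'`, then each region
`C(s_i, s_{i+1})` is nonempty and, for `i ≠ j`, no (undirected) edge joins a vertex of
`C(s_i, s_{i+1})` to a vertex of `C(s_j, s_{j+1})`. -/
theorem stmt13 (D : V → V → Prop) (W : V → V → ℕ)
    (S : Set V) (hS : IsHubset D S) (S' : Set V) (hS' : S' ⊆ S)
    (l : ℕ) (hl : 3 ≤ l) (f : ZMod l → V)
    (hinj : Function.Injective f) (hmem : ∀ i, f i ∈ S')
    (hcyc : ∀ i, URAdj D S' (f i) (f (i + 1))) :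
    (∀ i, (CReg D S' (f i) (f (i + 1))).Nonempty) ∧
    (∀ i j, i ≠ j →
      ∀ x ∈ CReg D S' (f i) (f (i + 1)), ∀ y ∈ CReg D S' (f j) (f (j + 1)),
        ¬ (D x y ∨ D y x)) :=
  stmt13_general D S' l hl f hinj hmem hcyc
end

section
/- Let H⃗ be a directed graph with hubset S such that the unique reachability graph UR_S of every subset of S is acyclic (a forest). Then H⃗ admits a hub-tree decomposition of width one. -/
/-!
Abstract the hubs to a finite family of sets `R s = Reach D s`, and build by induction on a
set `W` of hubs a tree on `W` in which, for every vertex `w`, the hubs reaching `w` span a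
subtree. For `|W| ≥ 2` it suffices to find `b ≠ t` in `W` such that everything `b` shares
with another hub of `W` lies in `R t`: then `b` is hung as a leaf on `t` in a tree for
`W \ {b}`. To find them, pick `x` of degree at most one in the forest `UR_W` and take a
tree for `W \ {x}`. Every leaf `u` of it, with neighbour `z`, already has `R u ∩ R y ⊆ R z`
for `y ≠ x`, so either `(u, z)` works or `u` shares with `x` a vertex no other hub reaches,
i.e. `u` is a `UR_W`-neighbour of `x`. The tree has two leaves, so one of them works.
-/

variable {V : Type*}

/-- The unique reachability graph on the vertex set `Sp`. -/
def URGraph (D : V → V → Prop) (Sp : Set V) : SimpleGraph Sp :=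
  SimpleGraph.fromRel fun a b => URAdj D Sp (a : V) (b : V)

open SimpleGraph Finset

namespace SimpleGraph

variable {G : SimpleGraph V}

theorem IsAcyclic.neighborSet_subset_of_isLongest (hG : G.IsAcyclic) {u v : V} {p : G.Walk u v}
    (hp : p.IsPath) (hmax : ∀ (u' v' : V) (q : G.Walk u' v'), q.IsPath → q.length ≤ p.length) :
    G.neighborSet u ⊆ {p.snd} := by
  intro w hw
  by_cases hws : w ∈ p.support
  · exact hG.eq_snd_of_adj_start hp hw hws
  · have := hmax _ _ _ (hp.cons hws (h := hw.symm))
    simp at this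

theorem IsAcyclic.exists_neighborSet_subsingleton [Finite V] [Nonempty V] (hG : G.IsAcyclic) :
    ∃ v, (G.neighborSet v).Subsingleton := by
  obtain ⟨u, _, p, hp, hmax⟩ := Walk.exists_isPath_forall_isPath_length_le_length G
  exact ⟨u, Set.subsingleton_singleton.anti (hG.neighborSet_subset_of_isLongest hp hmax)⟩

theorem IsAcyclic.exists_ne_neighborSet_eq_singleton [Finite V] (hG : G.IsAcyclic) {a b : V}
    (hab : G.Reachable a b) (hne : a ≠ b) :
    ∃ u v zu zv, u ≠ v ∧ G.neighborSet u = {zu} ∧ G.neighborSet v = {zv} := by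
  have : Nonempty V := ⟨a⟩
  obtain ⟨u, v, p, hp, hmax⟩ := Walk.exists_isPath_forall_isPath_length_le_length G
  have hnil : ¬p.Nil := by
    obtain ⟨q, hq⟩ := hab.exists_isPath
    have hq_len : 0 < q.length := (q.not_nil_iff_lt_length).mp fun h => hne (hq.nil_iff_eq.mp h)
    exact (p.not_nil_iff_lt_length).mpr (hq_len.trans_le (hmax _ _ q hq))
  refine ⟨u, v, p.snd, p.penultimate, fun h => hnil (hp.nil_iff_eq.mpr h), ?_, ?_⟩
  · exact (hG.neighborSet_subset_of_isLongest hp hmax).antisymm (by simpa using p.adj_snd hnil)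
  · have := hG.neighborSet_subset_of_isLongest hp.reverse (by simpa using hmax)
    rw [Walk.snd_reverse] at this
    exact this.antisymm (by simpa using (p.adj_penultimate hnil).symm)

theorem Walk.IsPath.eq_or_eq_of_neighborSet_subsingleton {a c v : V} {p : G.Walk a c}
    (hp : p.IsPath) (hv : v ∈ p.support) (hnv : (G.neighborSet v).Subsingleton) :
    v = a ∨ v = c := by
  by_contra! h
  obtain ⟨q, r, -, -, rfl⟩ := hp.mem_support_iff_exists_append.mp hv
  have hq : ¬q.Nil := fun hq => h.1 hq.eq.symm
  have hr : ¬r.Nil := fun hr => h.2 hr.eq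
  exact hp.ne_of_mem_support_of_append (r.adj_snd hr).ne' (q.getVert_mem_support _)
    (r.getVert_mem_support _) (hnv (q.adj_penultimate hq).symm (r.adj_snd hr))

theorem not_reachable_of_forall_not_adj {b t : V} (hb : ∀ w, ¬G.Adj b w) (hbt : b ≠ t) :
    ¬G.Reachable b t := by
  rintro ⟨p⟩
  cases p with
  | nil => exact hbt rfl
  | cons h _ => exact hb _ h

theorem neighborSet_sup_edge_of_forall_not_adj {b t : V} (hb : ∀ w, ¬G.Adj b w) (hbt : b ≠ t) :
    (G ⊔ edge b t).neighborSet b = {t} := by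
  ext w
  simp only [mem_neighborSet, sup_adj, edge_adj, Set.mem_singleton_iff]
  grind

theorem Walk.mem_edgeSet_of_notMem_support_sup_edge {b t x y : V}
    (p : (G ⊔ edge b t).Walk x y) (hb : b ∉ p.support) : ∀ e ∈ p.edges, e ∈ G.edgeSet := by
  intro e he
  induction e using Sym2.ind with
  | _ c d =>
    rcases p.adj_of_mem_edges he with h | h
    · exact h
    · rw [edge_adj] at h
      rcases h.1 with ⟨rfl, -⟩ | ⟨-, rfl⟩
      · exact absurd (p.fst_mem_support_of_mem_edges he) hb
      · exact absurd (p.snd_mem_support_of_mem_edges he) hb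

end SimpleGraph

section SetFamily

variable {ι α : Type*} {R : ι → Set α}

def PathConvex (R : ι → Set α) (T : SimpleGraph ι) : Prop :=
  ∀ ⦃a c : ι⦄ (p : T.Walk a c), p.IsPath → ∀ k ∈ p.support, R a ∩ R c ⊆ R k

def PrivatelyMeet (R : ι → Set α) (J : Set ι) (x y : ι) : Prop :=
  ∃ a ∈ R x ∩ R y, ∀ m ∈ J, a ∈ R m → m = x ∨ m = y

/-- For `R = Reach D` on the hubs this is the unique reachability graph `UR_J`. -/
def privateMeetGraph (R : ι → Set α) (J : Set ι) : SimpleGraph J :=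
  SimpleGraph.fromRel fun x y => PrivatelyMeet R J x y

theorem PathConvex.inter_subset_of_neighborSet_subset {T : SimpleGraph ι} (hT : PathConvex R T)
    {u y z : ι} (hyu : T.Reachable y u) (hne : y ≠ u) (hu : T.neighborSet u ⊆ {z}) :
    R u ∩ R y ⊆ R z := by
  obtain ⟨p, hp⟩ := hyu.exists_isPath
  have hnil : ¬p.Nil := fun h => hne h.eq
  have hz : p.penultimate = z := hu (p.adj_penultimate hnil).symm
  rw [Set.inter_comm, ← hz]
  exact hT p hp _ (p.getVert_mem_support _)

theorem PathConvex.sup_edge {T : SimpleGraph ι} (hT : PathConvex R T) {b t : ι}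
    (hb : ∀ w, ¬T.Adj b w) (hbt : b ≠ t) (hsub : ∀ y, T.Reachable t y → R b ∩ R y ⊆ R t) :
    PathConvex R (T ⊔ edge b t) := by
  have hnb := neighborSet_sup_edge_of_forall_not_adj hb hbt
  have from_b : ∀ ⦃c⦄ (p : (T ⊔ edge b t).Walk b c), p.IsPath →
      ∀ k ∈ p.support, R b ∩ R c ⊆ R k := by
    intro c p hp k hk
    cases p with
    | nil =>
      rw [Walk.support_nil, List.mem_singleton] at hk
      exact hk ▸ Set.inter_subset_left
    | cons h r =>
      obtain rfl : _ = t := hnb.subset h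
      obtain ⟨hr, hbr⟩ := (Walk.cons_isPath_iff _ _).mp hp
      have hE := r.mem_edgeSet_of_notMem_support_sup_edge hbr
      rcases List.mem_cons.mp (Walk.support_cons _ _ ▸ hk) with rfl | hk
      · exact Set.inter_subset_left
      · calc R b ∩ R c ⊆ R _ ∩ R c :=
              Set.subset_inter (hsub c (r.transfer T hE).reachable) Set.inter_subset_right
          _ ⊆ R k := hT _ (hr.transfer hE) k (by rwa [Walk.support_transfer])
  intro a c p hp k hk
  by_cases hbp : b ∈ p.support
  · rcases hp.eq_or_eq_of_neighborSet_subsingleton hbp (hnb ▸ Set.subsingleton_singleton)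
      with rfl | rfl
    · exact from_b p hp k hk
    · rw [Set.inter_comm]
      exact from_b p.reverse hp.reverse k (by simpa using hk)
  · have hE := p.mem_edgeSet_of_notMem_support_sup_edge hbp
    exact hT _ (hp.transfer hE) k (by rwa [Walk.support_transfer])

structure IsConvexTreeOn (R : ι → Set α) (W : Finset ι) (T : SimpleGraph ι) : Prop where
  mem_of_adj : ∀ ⦃a b : ι⦄, T.Adj a b → a ∈ W
  reachable : ∀ a ∈ W, ∀ b ∈ W, T.Reachable a b
  isAcyclic : T.IsAcyclic
  pathConvex : PathConvex R T

namespace IsConvexTreeOn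

variable {W : Finset ι} {T : SimpleGraph ι}

theorem singleton (x : ι) : IsConvexTreeOn R {x} ⊥ where
  mem_of_adj _ _ h := h.elim
  reachable a ha b hb := by rw [mem_singleton.mp ha, mem_singleton.mp hb]
  isAcyclic := isAcyclic_bot
  pathConvex a c p _ k hk := by
    cases p with
    | nil =>
      rw [Walk.support_nil, List.mem_singleton] at hk
      exact hk ▸ Set.inter_subset_left
    | cons h _ => exact h.elim

theorem mem_of_reachable (hT : IsConvexTreeOn R W T) {t y : ι} (ht : t ∈ W)
    (h : T.Reachable t y) : y ∈ W := by
  obtain ⟨p⟩ := h.symm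
  cases p with
  | nil => exact ht
  | cons h _ => exact hT.mem_of_adj h

theorem insert_leaf [DecidableEq ι] (hT : IsConvexTreeOn R W T) {b t : ι} (hb : b ∉ W)
    (ht : t ∈ W) (hsub : ∀ y ∈ W, R b ∩ R y ⊆ R t) :
    IsConvexTreeOn R (insert b W) (T ⊔ edge b t) := by
  have hnb : ∀ w, ¬T.Adj b w := fun w h => hb (hT.mem_of_adj h)
  have hbt : b ≠ t := fun h => hb (h ▸ ht)
  have hadj : (T ⊔ edge b t).Adj b t :=
    Or.inr ((edge_adj b t b t).mpr ⟨Or.inl ⟨rfl, rfl⟩, hbt⟩)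
  have to_t : ∀ x ∈ insert b W, (T ⊔ edge b t).Reachable x t := by
    intro x hx
    rcases mem_insert.mp hx with rfl | hx
    · exact hadj.reachable
    · exact (hT.reachable x hx t ht).mono le_sup_left
  refine ⟨?_, fun x hx y hy => (to_t x hx).trans (to_t y hy).symm, ?_, ?_⟩
  · rintro x y (h | h)
    · exact mem_insert_of_mem (hT.mem_of_adj h)
    · rcases ((edge_adj b t x y).mp h).1 with ⟨rfl, -⟩ | ⟨rfl, -⟩
      · exact mem_insert_self x W
      · exact mem_insert_of_mem ht
  · exact hT.isAcyclic.sup_edge_of_not_reachable (not_reachable_of_forall_not_adj hnb hbt)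
  · exact hT.pathConvex.sup_edge hnb hbt fun y hy => hsub y (hT.mem_of_reachable ht hy)

theorem leaf_inter_subset_or_privatelyMeet [DecidableEq ι] {x u z : ι}
    (hT : IsConvexTreeOn R (W.erase x) T) (hu : T.neighborSet u = {z}) :
    (∀ y ∈ W.erase u, R u ∩ R y ⊆ R z) ∨ PrivatelyMeet R W x u := by
  have huW : u ∈ W.erase x := hT.mem_of_adj (show z ∈ T.neighborSet u by rw [hu]; rfl)
  have hleaf : ∀ y ∈ W.erase x, y ≠ u → R u ∩ R y ⊆ R z := fun y hy hyu =>
    hT.pathConvex.inter_subset_of_neighborSet_subset (hT.reachable y hy u huW) hyu hu.subset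
  by_cases hxu : R u ∩ R x ⊆ R z
  · left
    intro y hy
    obtain ⟨hyu, hyW⟩ := mem_erase.mp hy
    by_cases hyx : y = x
    · exact hyx ▸ hxu
    · exact hleaf y (mem_erase.mpr ⟨hyx, hyW⟩) hyu
  · right
    obtain ⟨a, ⟨hau, hax⟩, haz⟩ := Set.not_subset.mp hxu
    refine ⟨a, ⟨hax, hau⟩, fun m hm ham => ?_⟩
    by_contra! hmxu
    exact haz (hleaf m (mem_erase.mpr ⟨hmxu.1, hm⟩) hmxu.2 ⟨hau, ham⟩)

end IsConvexTreeOn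

theorem exists_pendant_pair [Finite ι] [DecidableEq ι] {W : Finset ι}
    (hR : (privateMeetGraph R W).IsAcyclic) (hW : W.Nontrivial)
    (ih : ∀ x ∈ W, ∃ T, IsConvexTreeOn R (W.erase x) T) :
    ∃ b ∈ W, ∃ t ∈ W, b ≠ t ∧ ∀ y ∈ W.erase b, R b ∩ R y ⊆ R t := by
  have : Nonempty (W : Set ι) := hW.nonempty.to_subtype
  obtain ⟨⟨x, hx⟩, hxdeg⟩ := hR.exists_neighborSet_subsingleton
  obtain ⟨T, hT⟩ := ih x hx
  rcases hW.erase_nonempty.exists_eq_singleton_or_nontrivial with ⟨u, hWu⟩ | ⟨y, hy, z, hz, hyz⟩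
  · have hu : u ∈ W.erase x := hWu ▸ mem_singleton_self u
    refine ⟨u, mem_of_mem_erase hu, x, hx, ne_of_mem_erase hu, fun y hy => ?_⟩
    obtain ⟨hyu, hyW⟩ := mem_erase.mp hy
    obtain rfl : y = x := by
      by_contra hyx
      exact hyu (mem_singleton.mp (hWu ▸ mem_erase.mpr ⟨hyx, hyW⟩))
    exact Set.inter_subset_right
  · obtain ⟨u, v, zu, zv, huv, hu, hv⟩ :=
      hT.isAcyclic.exists_ne_neighborSet_eq_singleton (hT.reachable y hy z hz) hyz
    have pendant_or_adj : ∀ {u zu}, T.neighborSet u = {zu} →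
        (∃ b ∈ W, ∃ t ∈ W, b ≠ t ∧ ∀ y ∈ W.erase b, R b ∩ R y ⊆ R t) ∨
        ∃ hu : u ∈ W, (privateMeetGraph R W).Adj ⟨x, hx⟩ ⟨u, hu⟩ := by
      intro u zu hu
      have hadj : T.Adj u zu := show zu ∈ T.neighborSet u by rw [hu]; rfl
      have huW := hT.mem_of_adj hadj
      refine (hT.leaf_inter_subset_or_privatelyMeet hu).imp (fun h => ?_) (fun h => ?_)
      · exact ⟨u, mem_of_mem_erase huW, zu, mem_of_mem_erase (hT.mem_of_adj hadj.symm),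
          hadj.ne, h⟩
      · exact ⟨mem_of_mem_erase huW, (fromRel_adj _ _ _).mpr
          ⟨fun h' => ne_of_mem_erase huW (congrArg Subtype.val h').symm, Or.inl h⟩⟩
    rcases pendant_or_adj hu with h | ⟨huW, hxu⟩
    · exact h
    rcases pendant_or_adj hv with h | ⟨hvW, hxv⟩
    · exact h
    exact absurd (congrArg Subtype.val (hxdeg hxu hxv)) huv

theorem exists_isConvexTreeOn [Finite ι] [DecidableEq ι]
    (hR : ∀ J : Set ι, (privateMeetGraph R J).IsAcyclic) (W : Finset ι) (hW : W.Nonempty) :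
    ∃ T, IsConvexTreeOn R W T := by
  induction W using Finset.strongInduction with
  | H W ih =>
    rcases hW.exists_eq_singleton_or_nontrivial with ⟨x, rfl⟩ | hW
    · exact ⟨⊥, .singleton x⟩
    obtain ⟨b, hb, t, ht, hbt, hsub⟩ := exists_pendant_pair (hR W) hW
      fun x hx => ih _ (erase_ssubset hx) hW.erase_nonempty
    have ht' : t ∈ W.erase b := mem_erase.mpr ⟨hbt.symm, ht⟩
    obtain ⟨T, hT⟩ := ih _ (erase_ssubset hb) ⟨t, ht'⟩
    rw [← insert_erase hb]
    exact ⟨_, hT.insert_leaf (notMem_erase b W) ht' hsub⟩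

theorem exists_isTree_pathConvex [Finite ι] [Nonempty ι]
    (hR : ∀ J : Set ι, (privateMeetGraph R J).IsAcyclic) :
    ∃ T : SimpleGraph ι, T.IsTree ∧ PathConvex R T := by
  classical
  have := Fintype.ofFinite ι
  obtain ⟨T, hT⟩ := exists_isConvexTreeOn hR univ univ_nonempty
  exact ⟨T, ⟨⟨fun a b => hT.reachable a (mem_univ a) b (mem_univ b)⟩, hT.isAcyclic⟩,
    hT.pathConvex⟩

end SetFamily

theorem IsHubset.nonempty [Nonempty V] {D : V → V → Prop} {S : Set V} (hS : IsHubset D S) :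
    S.Nonempty := by
  obtain ⟨v⟩ := ‹Nonempty V›
  by_cases hv : v ∈ S
  · exact ⟨v, hv⟩
  · obtain ⟨s, hs, -⟩ := hS.2 v hv
    exact ⟨s, hs⟩

theorem urAdj_of_privatelyMeet {D : V → V → Prop} {S : Set V} {J : Set S} {x y : S}
    (hxy : x ≠ y) (h : PrivatelyMeet (fun s : S => Reach D s) J x y) :
    URAdj D (Subtype.val '' J) x y := by
  obtain ⟨a, ha, hpriv⟩ := h
  refine ⟨Subtype.val_injective.ne hxy, a, ha, ?_⟩
  simp only [ReachS, Set.mem_iUnion]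
  rintro ⟨_, ⟨⟨m, hm, rfl⟩, hmxy⟩, ham⟩
  rcases hpriv m hm ham with rfl | rfl <;> simp at hmxy

theorem isAcyclic_privateMeetGraph_of_URGraph {D : V → V → Prop} {S : Set V} (J : Set S)
    (h : (URGraph D (Subtype.val '' J)).IsAcyclic) :
    (privateMeetGraph (fun s : S => Reach D s) J).IsAcyclic := by
  let f : privateMeetGraph (fun s : S => Reach D s) J →g URGraph D (Subtype.val '' J) :=
    { toFun := fun x => ⟨x.1.1, x.1, x.2, rfl⟩
      map_rel' := by
        rintro x y ⟨hxy, hr⟩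
        have hxy' : (x : S) ≠ y := Subtype.coe_injective.ne hxy
        refine ⟨fun h' => hxy' (Subtype.ext (congrArg Subtype.val h' :)), ?_⟩
        exact hr.imp (urAdj_of_privatelyMeet hxy') (urAdj_of_privatelyMeet hxy'.symm) }
  exact h.comap f fun x y h' => Subtype.ext (Subtype.ext (congrArg Subtype.val h' :))

/-- if the unique reachability graph of every subset of the hubset `S` is
acyclic, then the directed graph admits a hub-tree decomposition of width one. -/
theorem stmt15 [Finite V] [Nonempty V] (D : V → V → Prop) (S : Set V)
    (hS : IsHubset D S)
    (hforest : ∀ Sp ⊆ S, (URGraph D Sp).IsAcyclic) :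
    ∃ T : SimpleGraph S, IsWidthOneDecomp D S T := by
  have : Nonempty S := hS.nonempty.to_subtype
  obtain ⟨T, hT, hconv⟩ := exists_isTree_pathConvex (R := fun s : S => Reach D s) fun J =>
    isAcyclic_privateMeetGraph_of_URGraph J (hforest _ (Subtype.coe_image_subset S J))
  exact ⟨T, hT, fun b b₁ b₂ p hp hb => hconv p hp b hb⟩
end
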